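/- For the graph G obtained by taking k ≥ 2 vertex-disjoint cycles and identifying one vertex from each cycle into a single common vertex v, the connected forcing number equals k + 1 (equivalently, equals b(G) + 1 where b(G) = k is the number of 2-connected blocks). -/

import Mathlib

/-! The hub together with the first vertex of every cycle is a connected forcing set of size
`k + 1`: starting from it, the colouring runs along each path. Conversely, while a cycle is
uncoloured the hub cannot force into it, having two neighbours there, so every forcing set meets
all `k` cycles; and a connected set meeting two different cycles must contain the hub, their only
common vertex. -/

open SimpleGraph

variable {V : Type*}

/-- One step of the (zero) forcing process: a colored vertex with exactly one
uncolored neighbor forces that neighbor to become colored. -/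
def zfStep (G : SimpleGraph V) (S : Set V) : Set V :=
  S ∪ {w | ∃ v ∈ S, G.neighborSet v \ S = {w}}

/-- `S` is a forcing set if iterating the forcing process colors all vertices. -/
def IsForcingSet (G : SimpleGraph V) (S : Set V) : Prop :=
  ∃ n : ℕ, (zfStep G)^[n] S = Set.univ

/-- A connected forcing set: a forcing set inducing a connected subgraph. -/
def IsConnForcingSet (G : SimpleGraph V) (S : Set V) : Prop :=
  IsForcingSet G S ∧ (G.induce S).Connected

/-- The forcing number `F(G)`. -/
noncomputable def forcingNumber (G : SimpleGraph V) : ℕ :=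
  sInf (Set.ncard '' {S : Set V | IsForcingSet G S})

/-- The connected forcing number `F_c(G)`. -/
noncomputable def connForcingNumber (G : SimpleGraph V) : ℕ :=
  sInf (Set.ncard '' {S : Set V | IsConnForcingSet G S})

/-- The graph obtained from `k` vertex-disjoint cycles, the `i`-th of length
`n i`, by identifying one vertex from each cycle into a single hub vertex.
The `i`-th cycle is represented by a path on `n i - 1` vertices
`0, 1, …, n i - 2`, whose two endpoints are joined to the hub. -/
def wedgeOfCycles (k : ℕ) (n : Fin k → ℕ) :
    SimpleGraph (Unit ⊕ (Σ i : Fin k, Fin (n i - 1))) where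
  Adj a b :=
    match a, b with
    | Sum.inl _, Sum.inl _ => False
    | Sum.inl _, Sum.inr p => (p.2 : ℕ) = 0 ∨ (p.2 : ℕ) = n p.1 - 2
    | Sum.inr p, Sum.inl _ => (p.2 : ℕ) = 0 ∨ (p.2 : ℕ) = n p.1 - 2
    | Sum.inr p, Sum.inr q =>
        p.1 = q.1 ∧ ((p.2 : ℕ) + 1 = (q.2 : ℕ) ∨ (q.2 : ℕ) + 1 = (p.2 : ℕ))
  symm := by
    constructor
    rintro (u | p) (v | q) h
    · exact h
    · exact h
    · exact h
    · exact ⟨h.1.symm, h.2.symm⟩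
  loopless := by
    constructor
    rintro (u | p) h
    · exact h
    · omega

section Forcing

variable {G : SimpleGraph V} {S T C : Set V}

lemma subset_zfStep (G : SimpleGraph V) (S : Set V) : S ⊆ zfStep G S :=
  Set.subset_union_left

lemma zfStep_mono (h : S ⊆ T) : zfStep G S ⊆ zfStep G T := by
  rintro w (hw | ⟨v, hv, hvw⟩)
  · exact Or.inl (h hw)
  by_cases hwT : w ∈ T
  · exact Or.inl hwT
  refine Or.inr ⟨v, h hv, Set.eq_singleton_iff_unique_mem.mpr ⟨⟨?_, hwT⟩, ?_⟩⟩
  · exact (hvw.symm.subset rfl).1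
  · exact fun x hx => hvw.subset ⟨hx.1, fun hxS => hx.2 (h hxS)⟩

lemma isForcingSet_of_chain {A : ℕ → Set V} {m : ℕ} (h0 : A 0 ⊆ S)
    (hsucc : ∀ t, A (t + 1) ⊆ zfStep G (A t)) (hm : A m = Set.univ) : IsForcingSet G S := by
  have hA : ∀ t, A t ⊆ (zfStep G)^[t] S := by
    intro t
    induction t with
    | zero => exact h0
    | succ t ih =>
      rw [Function.iterate_succ_apply']
      exact (hsucc t).trans (zfStep_mono ih)
  exact ⟨m, Set.eq_univ_of_univ_subset (hm ▸ hA m)⟩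

lemma disjoint_zfStep
    (hC : ∀ v ∉ C, ∀ w ∈ C, G.Adj v w → ∃ w' ∈ C, w' ≠ w ∧ G.Adj v w')
    (hS : Disjoint S C) : Disjoint (zfStep G S) C := by
  refine Set.disjoint_union_left.mpr ⟨hS, Set.disjoint_left.mpr ?_⟩
  rintro w ⟨v, hv, hvw⟩ hwC
  have hw : w ∈ G.neighborSet v := (hvw.symm.subset rfl).1
  obtain ⟨w', hw'C, hw'w, hvw'⟩ := hC v (Set.disjoint_left.mp hS hv) w hwC hw
  exact hw'w (hvw.subset ⟨hvw', Set.disjoint_right.mp hS hw'C⟩)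

lemma IsForcingSet.inter_nonempty (hS : IsForcingSet G S)
    (hC : ∀ v ∉ C, ∀ w ∈ C, G.Adj v w → ∃ w' ∈ C, w' ≠ w ∧ G.Adj v w')
    (hne : C.Nonempty) : (S ∩ C).Nonempty := by
  by_contra hSC
  obtain ⟨m, hm⟩ := hS
  have hdisj : ∀ t, Disjoint ((zfStep G)^[t] S) C := by
    intro t
    induction t with
    | zero => exact Set.disjoint_iff_inter_eq_empty.mpr (Set.not_nonempty_iff_eq_empty.mp hSC)
    | succ t ih =>
      rw [Function.iterate_succ_apply']
      exact disjoint_zfStep hC ih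
  exact hne.ne_empty (Set.univ_disjoint.mp (hm ▸ hdisj m))

end Forcing

section Connectivity

variable {G : SimpleGraph V}

lemma SimpleGraph.Reachable.eq_of_forall_adj {α : Type*} {f : V → α}
    (hf : ∀ u v, G.Adj u v → f u = f v) {u v : V} (h : G.Reachable u v) : f u = f v := by
  obtain ⟨p⟩ := h
  induction p with
  | nil => rfl
  | cons huv _ ih => exact (hf _ _ huv).trans ih

lemma SimpleGraph.induce_connected_of_forall_adj {s : Set V} {c : V} (hc : c ∈ s)
    (hadj : ∀ v ∈ s, v ≠ c → G.Adj c v) : (G.induce s).Connected := by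
  refine G.induce_connected_of_patches c hc fun {v} hv => ?_
  by_cases hvc : v = c
  · subst hvc
    exact ⟨{v}, Set.singleton_subset_iff.mpr hv, rfl, rfl, .rfl⟩
  · exact ⟨{c, v}, Set.insert_subset hc (Set.singleton_subset_iff.mpr hv), Or.inl rfl,
      Or.inr rfl, (G.induce_pair_connected_of_adj (hadj v hv hvc)).preconnected _ _⟩

end Connectivity

lemma connForcingNumber_eq_of_forall_le {G : SimpleGraph V} {S₀ : Set V} {m : ℕ}
    (hS₀ : IsConnForcingSet G S₀) (hcard : S₀.ncard ≤ m)
    (hle : ∀ S, IsConnForcingSet G S → m ≤ S.ncard) : connForcingNumber G = m := by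
  have hmem : S₀.ncard ∈ Set.ncard '' {S | IsConnForcingSet G S} := ⟨S₀, hS₀, rfl⟩
  exact le_antisymm ((Nat.sInf_le hmem).trans hcard)
    (le_csInf ⟨_, hmem⟩ (by rintro _ ⟨S, hS, rfl⟩; exact hle S hS))

namespace wedgeOfCycles

variable {k : ℕ} {n : Fin k → ℕ}

abbrev Vertex (k : ℕ) (n : Fin k → ℕ) := Unit ⊕ (Σ i : Fin k, Fin (n i - 1))

def cycleIndex : Vertex k n → Option (Fin k) := Sum.elim (fun _ => none) (fun p => some p.1)

def depth : Vertex k n → ℕ := Sum.elim (fun _ => 0) (fun p => p.2)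

def cycle (i : Fin k) : Set (Vertex k n) := cycleIndex ⁻¹' {some i}

lemma cycleIndex_eq_of_adj {x y : Vertex k n} (h : (wedgeOfCycles k n).Adj x y)
    (hx : x ≠ Sum.inl ()) (hy : y ≠ Sum.inl ()) : cycleIndex x = cycleIndex y := by
  rcases x with ⟨⟩ | p
  · exact absurd rfl hx
  rcases y with ⟨⟩ | q
  · exact absurd rfl hy
  exact congrArg some h.1

lemma exists_ne_adj_mem_cycle {i : Fin k} (hn : 3 ≤ n i) :
    ∀ v ∉ cycle i, ∀ w ∈ cycle i, (wedgeOfCycles k n).Adj v w →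
      ∃ w' ∈ cycle i, w' ≠ w ∧ (wedgeOfCycles k n).Adj v w' := by
  rintro (⟨⟩ | ⟨i', j'⟩) hv (⟨⟩ | ⟨i'', j⟩) hw hvw
  · exact absurd hw (by simp [cycle, cycleIndex])
  · obtain rfl : i'' = i := by simpa [cycle, cycleIndex] using hw
    have hj : (j : ℕ) = 0 ∨ (j : ℕ) = n i'' - 2 := hvw
    -- `n i - 2 - j` swaps the two endpoints `0` and `n i - 2` of the path
    refine ⟨Sum.inr ⟨i'', ⟨n i'' - 2 - j, by omega⟩⟩, by simp [cycle, cycleIndex], ?_, ?_⟩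
    · simp only [ne_eq, Sum.inr.injEq, Sigma.mk.inj_iff, heq_eq_eq, true_and, Fin.ext_iff]
      omega
    · show n i'' - 2 - j = 0 ∨ n i'' - 2 - j = n i'' - 2
      omega
  · exact absurd hw (by simp [cycle, cycleIndex])
  · have hi : i' = i'' := hvw.1
    have hw' : i'' = i := by simpa [cycle, cycleIndex] using hw
    exact absurd (by simp [cycle, cycleIndex, hi, hw']) hv

lemma cycle_nonempty {i : Fin k} (hn : 2 ≤ n i) : (cycle i : Set (Vertex k n)).Nonempty :=
  ⟨Sum.inr ⟨i, ⟨0, by omega⟩⟩, rfl⟩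

lemma _root_.IsForcingSet.inter_cycle_nonempty {S : Set (Vertex k n)}
    (hS : IsForcingSet (wedgeOfCycles k n) S) {i : Fin k} (hn : 3 ≤ n i) :
    (S ∩ cycle i).Nonempty :=
  hS.inter_nonempty (exists_ne_adj_mem_cycle hn) (cycle_nonempty (Nat.le_of_succ_le hn))

lemma hub_mem_of_isConnForcingSet (hk : 2 ≤ k) (hn : ∀ i, 3 ≤ n i) {S : Set (Vertex k n)}
    (hS : IsConnForcingSet (wedgeOfCycles k n) S) : Sum.inl () ∈ S := by
  by_contra hhub
  obtain ⟨x, hxS, hx⟩ := hS.1.inter_cycle_nonempty (hn ⟨0, by omega⟩)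
  obtain ⟨y, hyS, hy⟩ := hS.1.inter_cycle_nonempty (hn ⟨1, by omega⟩)
  have hxy : cycleIndex x = cycleIndex y :=
    (hS.2.preconnected ⟨x, hxS⟩ ⟨y, hyS⟩).eq_of_forall_adj (f := fun z : S => cycleIndex z.1)
      fun u v huv => cycleIndex_eq_of_adj huv (ne_of_mem_of_not_mem u.2 hhub)
        (ne_of_mem_of_not_mem v.2 hhub)
  rw [hx, hy] at hxy
  simp at hxy

lemma add_one_le_ncard_of_isConnForcingSet (hk : 2 ≤ k) (hn : ∀ i, 3 ≤ n i)
    {S : Set (Vertex k n)} (hS : IsConnForcingSet (wedgeOfCycles k n) S) : k + 1 ≤ S.ncard := by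
  have hsurj : cycleIndex '' S = Set.univ := by
    refine Set.eq_univ_of_forall fun
      | none => ⟨_, hub_mem_of_isConnForcingSet hk hn hS, rfl⟩
      | some i => hS.1.inter_cycle_nonempty (hn i)
  calc k + 1 = (cycleIndex '' S).ncard := by simp [hsurj]
    _ ≤ S.ncard := Set.ncard_image_le

lemma setOf_depth_le_succ_subset (t : ℕ) :
    {x : Vertex k n | depth x ≤ t + 1} ⊆ zfStep (wedgeOfCycles k n) {x | depth x ≤ t} := by
  intro x hx
  by_cases hxt : depth x ≤ t
  · exact subset_zfStep _ _ hxt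
  rcases x with ⟨⟩ | ⟨i, j⟩
  · exact absurd (Nat.zero_le t) hxt
  have hj : (j : ℕ) = t + 1 := by simp only [Set.mem_ofPred_eq, depth, Sum.elim_inr] at hx hxt; omega
  refine Or.inr ⟨Sum.inr ⟨i, ⟨t, by have := j.isLt; omega⟩⟩, le_refl t, ?_⟩
  ext (⟨⟩ | ⟨i', j'⟩)
  · simp [depth]
  · simp only [depth, neighborSet, wedgeOfCycles, Set.mem_sdiff, Set.mem_ofPred_eq,
      Sum.elim_inr, not_le, Set.mem_singleton_iff, Sum.inr.injEq, Sigma.mk.inj_iff]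
    constructor
    · rintro ⟨⟨rfl, hadj⟩, ht⟩
      exact ⟨rfl, heq_of_eq (Fin.ext (by omega))⟩
    · rintro ⟨rfl, hj'⟩
      obtain rfl := eq_of_heq hj'
      omega

lemma isForcingSet_setOf_depth_eq_zero :
    IsForcingSet (wedgeOfCycles k n) {x | depth x = 0} := by
  obtain ⟨m, hm⟩ := Finite.exists_le (depth : Vertex k n → ℕ)
  exact isForcingSet_of_chain (A := fun t => {x | depth x ≤ t}) (m := m) (fun _ => Nat.le_zero.mp)
    setOf_depth_le_succ_subset (Set.eq_univ_of_forall hm)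

lemma connected_induce_setOf_depth_eq_zero :
    ((wedgeOfCycles k n).induce {x | depth x = 0}).Connected :=
  induce_connected_of_forall_adj (c := Sum.inl ()) rfl fun
    | Sum.inl (), _, h => absurd rfl h
    | Sum.inr _, hj, _ => Or.inl hj

lemma ncard_setOf_depth_eq_zero_le : {x : Vertex k n | depth x = 0}.ncard ≤ k + 1 := by
  have hinj : Set.InjOn cycleIndex {x : Vertex k n | depth x = 0} := by
    rintro (⟨⟩ | ⟨i, j⟩) hx (⟨⟩ | ⟨i', j'⟩) hy h
    · rfl
    · simp [cycleIndex] at h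
    · simp [cycleIndex] at h
    · obtain rfl : i = i' := Option.some.inj h
      exact congrArg (Sum.inr ∘ Sigma.mk i) (Fin.ext (hx.trans hy.symm))
  calc _ ≤ (Set.univ : Set (Option (Fin k))).ncard :=
        Set.ncard_le_ncard_of_injOn cycleIndex (fun _ _ => trivial) hinj
    _ = k + 1 := by simp

end wedgeOfCycles

open wedgeOfCycles in
/-- For the graph obtained from `k ≥ 2` vertex-disjoint cycles (each of length
at least 3) by identifying one vertex from each cycle into a common vertex,
the connected forcing number equals `k + 1` (`= b(G) + 1`). -/
theorem connForcingNumber_wedgeOfCycles (k : ℕ) (hk : 2 ≤ k)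
    (n : Fin k → ℕ) (hn : ∀ i, 3 ≤ n i) :
    connForcingNumber (wedgeOfCycles k n) = k + 1 :=
  connForcingNumber_eq_of_forall_le
    ⟨isForcingSet_setOf_depth_eq_zero, connected_induce_setOf_depth_eq_zero⟩
    ncard_setOf_depth_eq_zero_le fun _ hS => add_one_le_ncard_of_isConnForcingSet hk hn hS
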